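/- arXiv:1804.03594 — 8 statements merged into one kernel-verified Lean document; each statement's English description precedes it below -/
import Mathlib

section
/- Let $\pmb{a} = (a_1,\dots,a_K)$ be a nonnegative real vector, $\pmb{w}$ a nonincreasing nonnegative weight vector summing to 1, and $\sigma$ a permutation of $[K]$ with $a_{\sigma(1)} \geq \dots \geq a_{\sigma(K)}$. If $\pmb{a}'$ is obtained from $\pmb{a}$ by setting $a'_{\sigma(i)} := a_{\sigma(i)} + a_{\sigma(j)}$ and $a'_{\sigma(j)} := 0$ for some $i < j$ (leaving other components unchanged), then $\mathrm{OWA}_{\pmb{w}}(\pmb{a}') \geq \mathrm{OWA}_{\pmb{w}}(\pmb{a})$. -/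
/-- OWA of a vector with nonincreasing weights: weights are applied to the
entries sorted in nonincreasing order. -/
noncomputable def OWA {K : ℕ} (w a : Fin K → ℝ) : ℝ :=
  ∑ k, w k * a (Tuple.sort (fun i => -a i) k)

/-!
Sorting `a` by `σ` realises `OWA w a` as `∑ k, w k * a (σ k)`. The transfer changes this sum by
`(w i - w j) * a (σ j) ≥ 0`, and for antitone weights any such permuted sum is at most the OWA
value of `a'` by the rearrangement inequality.
-/

open Function

lemma OWA_eq_sum_of_antitone_comp {K : ℕ} (w a : Fin K → ℝ) (σ : Equiv.Perm (Fin K))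
    (hσ : Antitone (a ∘ σ)) : OWA w a = ∑ k, w k * a (σ k) := by
  have hsort : (fun i => -a i) ∘ σ = (fun i => -a i) ∘ Tuple.sort (fun i => -a i) :=
    Tuple.comp_sort_eq_comp_iff_monotone.2 fun _ _ hxy => neg_le_neg (hσ hxy)
  refine Finset.sum_congr rfl fun k _ => ?_
  rw [neg_injective (congrFun hsort k)]

lemma sum_mul_comp_perm_le_OWA {K : ℕ} {w : Fin K → ℝ} (hw : Antitone w) (a : Fin K → ℝ)
    (σ : Equiv.Perm (Fin K)) : ∑ k, w k * a (σ k) ≤ OWA w a := by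
  set τ := Tuple.sort (fun i => -a i)
  have hτ : Antitone (a ∘ τ) := fun _ _ hxy =>
    neg_le_neg_iff.1 (Tuple.monotone_sort (fun i => -a i) hxy)
  simpa [τ, OWA, Equiv.Perm.inv_def] using
    (hw.monovary hτ).sum_smul_comp_perm_le_sum_smul (σ := τ⁻¹ * σ)

lemma sum_mul_update_transfer {ι R : Type*} [Fintype ι] [DecidableEq ι] [CommRing R]
    (w b : ι → R) {i j : ι} (hij : i ≠ j) :
    ∑ k, w k * update (update b j 0) i (b i + b j) k = ∑ k, w k * b k + (w i - w j) * b j := by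
  have hupdate :
      update (update b j 0) i (b i + b j) = b + Pi.single i (b j) - Pi.single j (b j) := by
    ext k
    rcases eq_or_ne k i with rfl | hki
    · simp [hij]
    rcases eq_or_ne k j with rfl | hkj
    · simp [hki]
    simp [hki, hkj]
  simp only [hupdate, Pi.add_apply, Pi.sub_apply, mul_add, mul_sub, Finset.sum_add_distrib,
    Finset.sum_sub_distrib, Pi.single_apply, mul_ite, mul_zero, Finset.sum_ite_eq',
    Finset.mem_univ, if_true]
  ring

theorem owa_transfer_general (K : ℕ) (a w : Fin K → ℝ)
    (ha : ∀ k, 0 ≤ a k) (hw : Antitone w)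
    (σ : Equiv.Perm (Fin K)) (hσ : Antitone (a ∘ σ))
    (i j : Fin K) (hij : i < j)
    (a' : Fin K → ℝ)
    (ha' : a' = Function.update (Function.update a (σ j) 0) (σ i)
      (a (σ i) + a (σ j))) :
    OWA w a ≤ OWA w a' := by
  have ha'σ : a' ∘ σ = update (update (a ∘ σ) j 0) i (a (σ i) + a (σ j)) := by
    simp [ha', update_comp_equiv]
  calc OWA w a = ∑ k, w k * a (σ k) := OWA_eq_sum_of_antitone_comp w a σ hσ
    _ ≤ ∑ k, w k * a (σ k) + (w i - w j) * a (σ j) :=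
      le_add_of_nonneg_right (mul_nonneg (sub_nonneg.2 (hw hij.le)) (ha _))
    _ = ∑ k, w k * a' (σ k) := by
      simp only [← comp_apply (f := a') (g := σ), ha'σ]
      exact (sum_mul_update_transfer w (a ∘ σ) hij.ne).symm
    _ ≤ OWA w a' := sum_mul_comp_perm_le_OWA hw a' σ

/-- Transferring mass from a smaller sorted position to a larger one (zeroing
the smaller) does not decrease the OWA value when the weights are nonincreasing. -/
theorem owa_transfer (K : ℕ) (a w : Fin K → ℝ)
    (ha : ∀ k, 0 ≤ a k) (hw : Antitone w) (hw0 : ∀ k, 0 ≤ w k)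
    (hw1 : ∑ k, w k = 1)
    (σ : Equiv.Perm (Fin K)) (hσ : Antitone (a ∘ σ))
    (i j : Fin K) (hij : i < j)
    (a' : Fin K → ℝ)
    (ha' : a' = Function.update (Function.update a (σ j) 0) (σ i)
      (a (σ i) + a (σ j))) :
    OWA w a ≤ OWA w a' :=
  owa_transfer_general K a w ha hw σ hσ i j hij a' ha'
end

section
/- Let $K$ be a multiple of $\ell \geq 1$, $\pmb{w}$ a nonincreasing nonnegative weight vector of length $K$ summing to 1, and $\pmb{a}$ a nonzero nonnegative real vector of length $K$. With aggregated vectors $\overline{a}_k = \frac{1}{\ell}\sum_{i=(k-1)\ell+1}^{k\ell} a_i$ and $\overline{w}_k = \sum_{i=(k-1)\ell+1}^{k\ell} w_i$, and $\rho = \max_{k \in [K/\ell]} \frac{\sum_{i=1}^k w_i}{\sum_{i=1}^k \overline{w}_i}$, one has $\mathrm{OWA}_{\pmb{w}}(\pmb{a}) \leq \ell\rho \cdot \mathrm{OWA}_{\overline{\pmb{w}}}(\overline{\pmb{a}})$. -/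
/-- Block-aggregated weights. -/
noncomputable def aggW (m ℓ : ℕ) (w : Fin (m * ℓ) → ℝ) : Fin m → ℝ :=
  fun k => ∑ i : Fin ℓ, w (finProdFinEquiv (k, i))

/-- Block-aggregated vector (block averages). -/
noncomputable def aggA (m ℓ : ℕ) (a : Fin (m * ℓ) → ℝ) : Fin m → ℝ :=
  fun k => (∑ i : Fin ℓ, a (finProdFinEquiv (k, i))) / ℓ

open Finset

theorem sum_mul_le_sum_mul_of_sum_range_le {R : Type*} [CommRing R] [LinearOrder R]
    [IsStrictOrderedRing R] {n : ℕ} {u g h : ℕ → R} (hu : Antitone u)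
    (hu0 : ∀ i, 0 ≤ u i) (hgh : ∀ k ≤ n, ∑ i ∈ range k, g i ≤ ∑ i ∈ range k, h i) :
    ∑ i ∈ range n, u i * g i ≤ ∑ i ∈ range n, u i * h i := by
  show ∑ i ∈ range n, u i • g i ≤ ∑ i ∈ range n, u i • h i
  rw [sum_range_by_parts u g, sum_range_by_parts u h]
  refine sub_le_sub (smul_le_smul_of_nonneg_left (hgh n le_rfl) (hu0 _))
    (sum_le_sum fun i hi =>
      smul_le_smul_of_nonpos_left (hgh _ ?_) (sub_nonpos.2 (hu (Nat.le_succ i))))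
  rw [mem_range] at hi
  omega

theorem Antitone.sum_le_sum_range_card {M : Type*} [AddCommMonoid M] [PartialOrder M]
    [IsOrderedAddMonoid M] {h : ℕ → M} (hh : Antitone h) (T : Finset ℕ) :
    ∑ i ∈ T, h i ≤ ∑ i ∈ range #T, h i := by
  set e := T.orderEmbOfFin rfl
  have he : ∀ i : Fin #T, (i : ℕ) ≤ e i := fun i =>
    calc (i : ℕ) = #((Iio i).map e.toEmbedding) := by rw [card_map, Fin.card_Iio]
      _ ≤ #(range (e i)) := card_le_card fun x hx => by
          obtain ⟨j, hj, rfl⟩ := mem_map.1 hx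
          exact mem_range.2 (e.strictMono (mem_Iio.1 hj))
      _ = e i := card_range _
  calc ∑ i ∈ T, h i = ∑ i, h (e i) := by
        conv_lhs => rw [← T.map_orderEmbOfFin_univ rfl]
        rw [sum_map]
        rfl
    _ ≤ ∑ i : Fin #T, h i := sum_le_sum fun i _ => hh (he i)
    _ = ∑ i ∈ range #T, h i := Fin.sum_univ_eq_sum_range h _

theorem sum_le_sum_image_fst_sum {α β γ M : Type*} [Fintype β] [DecidableEq α]
    [AddCommMonoid M] [PartialOrder M] [IsOrderedAddMonoid M] (e : α × β ≃ γ)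
    (T : Finset γ) {f : γ → M} (hf : ∀ x, 0 ≤ f x) :
    ∑ x ∈ T, f x ≤ ∑ a ∈ T.image (fun x => (e.symm x).1), ∑ b, f (e (a, b)) := by
  rw [← sum_product']
  calc ∑ x ∈ T, f x = ∑ p ∈ T.map e.symm.toEmbedding, f (e p) := by simp [sum_map]
    _ ≤ _ := sum_le_sum_of_subset_of_nonneg (fun p hp => ?_) fun _ _ _ => hf _
  obtain ⟨x, hx, rfl⟩ := mem_map.1 hp
  exact mem_product.2 ⟨mem_image_of_mem _ hx, mem_univ _⟩

theorem sum_Iic_val_eq_sum_range {M : Type*} [AddCommMonoid M] {n : ℕ} (F : ℕ → M)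
    (t : Fin n) : ∑ i ∈ Iic t, F i = ∑ i ∈ range (t + 1), F i := by
  rw [Nat.range_succ_eq_Iic, ← Fin.map_valEmbedding_Iic, sum_map]
  rfl

def padZero {α : Type*} [Zero α] {n : ℕ} (v : Fin n → α) (i : ℕ) : α :=
  if h : i < n then v ⟨i, h⟩ else 0

section padZero

variable {n : ℕ}

@[simp]
theorem padZero_val {α : Type*} [Zero α] (v : Fin n → α) (i : Fin n) : padZero v i = v i :=
  dif_pos i.isLt

theorem padZero_of_le {α : Type*} [Zero α] (v : Fin n → α) {i : ℕ} (hi : n ≤ i) :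
    padZero v i = 0 :=
  dif_neg (not_lt.2 hi)

theorem sum_range_padZero {M : Type*} [AddCommMonoid M] (v : Fin n → M) (k : ℕ) :
    ∑ i ∈ range k, padZero v i = ∑ i : Fin (min k n), v (Fin.castLE (min_le_right k n) i) := by
  rw [← sum_subset (range_subset_range.2 (min_le_left k n))
    fun i hik hi => padZero_of_le v (by simp at hik hi; omega), ← Fin.sum_univ_eq_sum_range]
  exact sum_congr rfl fun i _ => dif_pos _

variable {v : Fin n → ℝ}

theorem padZero_nonneg (hv : ∀ i, 0 ≤ v i) (i : ℕ) : 0 ≤ padZero v i := by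
  unfold padZero
  split_ifs
  exacts [hv _, le_rfl]

theorem antitone_padZero (hv : Antitone v) (hv0 : ∀ i, 0 ≤ v i) : Antitone (padZero v) := by
  intro i j hij
  by_cases hj : j < n
  · rw [padZero, padZero, dif_pos hj, dif_pos (hij.trans_lt hj)]
    exact hv hij
  · rw [padZero_of_le v (not_lt.1 hj)]
    exact padZero_nonneg hv0 i

theorem sum_range_padZero_le_mul_of_sum_Iic_le {N : ℕ} (h : n ≤ N) {f : Fin N → ℝ} {c : ℝ}
    (hfv : ∀ t, ∑ i ∈ Iic t, f (Fin.castLE h i) ≤ c * ∑ i ∈ Iic t, v i) {k : ℕ} (hk : k ≤ n) :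
    ∑ i ∈ range k, padZero f i ≤ c * ∑ i ∈ range k, padZero v i := by
  obtain _ | k := k
  · simp
  have := hfv ⟨k, hk⟩
  rw [sum_congr rfl fun i _ => (padZero_val f (Fin.castLE h i)).symm,
    sum_congr rfl fun i _ => (padZero_val v i).symm] at this
  simpa only [Fin.val_castLE, sum_Iic_val_eq_sum_range] using this

end padZero

noncomputable def sortedDesc {n : ℕ} (v : Fin n → ℝ) : ℕ → ℝ :=
  padZero (v ∘ Tuple.sort (fun j => -v j))

section sortedDesc

variable {n : ℕ} {v : Fin n → ℝ}

theorem antitone_comp_sort_neg (v : Fin n → ℝ) : Antitone (v ∘ Tuple.sort (fun j => -v j)) :=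
  fun _ _ hij => neg_le_neg_iff.1 (Tuple.monotone_sort (fun j => -v j) hij)

theorem sortedDesc_of_le (v : Fin n → ℝ) {i : ℕ} (hi : n ≤ i) : sortedDesc v i = 0 :=
  padZero_of_le _ hi

theorem sortedDesc_nonneg (hv : ∀ i, 0 ≤ v i) (i : ℕ) : 0 ≤ sortedDesc v i :=
  padZero_nonneg (fun _ => hv _) i

theorem antitone_sortedDesc (hv : ∀ i, 0 ≤ v i) : Antitone (sortedDesc v) :=
  antitone_padZero (antitone_comp_sort_neg v) fun _ => hv _

theorem exists_sum_eq_sum_range_sortedDesc (v : Fin n → ℝ) (k : ℕ) :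
    ∃ T : Finset (Fin n), #T ≤ k ∧ ∑ i ∈ T, v i = ∑ i ∈ range k, sortedDesc v i := by
  refine ⟨univ.map ((Fin.castLEEmb (min_le_right k n)).trans
    (Tuple.sort fun j => -v j).toEmbedding), by simp, ?_⟩
  rw [sortedDesc, sum_range_padZero, sum_map]
  rfl

theorem sum_le_sum_range_sortedDesc (hv : ∀ i, 0 ≤ v i) {T : Finset (Fin n)} {k : ℕ}
    (hT : #T ≤ k) : ∑ i ∈ T, v i ≤ ∑ i ∈ range k, sortedDesc v i := by
  set σ := Tuple.sort fun j => -v j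
  set e : Fin n ↪ ℕ := σ.symm.toEmbedding.trans Fin.valEmbedding
  calc ∑ i ∈ T, v i = ∑ i ∈ T.map e, sortedDesc v i := by
        rw [sum_map]
        refine sum_congr rfl fun i _ => ?_
        simp [e, sortedDesc, σ]
    _ ≤ ∑ i ∈ range #(T.map e), sortedDesc v i := (antitone_sortedDesc hv).sum_le_sum_range_card _
    _ ≤ ∑ i ∈ range k, sortedDesc v i :=
        sum_le_sum_of_subset_of_nonneg (range_subset_range.2 (by simpa using hT))
          fun i _ _ => sortedDesc_nonneg hv i

theorem OWA_eq_sum_range (w a : Fin n → ℝ) :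
    OWA w a = ∑ i ∈ range n, padZero w i * sortedDesc a i := by
  rw [← Fin.sum_univ_eq_sum_range (fun i => padZero w i * sortedDesc a i)]
  simp [OWA, sortedDesc]

end sortedDesc

section Aggregation

variable {m ℓ : ℕ}

theorem aggA_nonneg {a : Fin (m * ℓ) → ℝ} (ha : ∀ i, 0 ≤ a i) (t : Fin m) : 0 ≤ aggA m ℓ a t :=
  div_nonneg (sum_nonneg fun _ _ => ha _) ℓ.cast_nonneg

theorem sum_range_sortedDesc_le_sum_range_sortedDesc_aggA (hℓ : 0 < ℓ)
    {a : Fin (m * ℓ) → ℝ} (ha : ∀ i, 0 ≤ a i) (k : ℕ) :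
    ∑ i ∈ range k, sortedDesc a i ≤ ∑ i ∈ range k, ℓ * sortedDesc (aggA m ℓ a) i := by
  obtain ⟨T, hTk, hT⟩ := exists_sum_eq_sum_range_sortedDesc a k
  set B := T.image fun x => (finProdFinEquiv.symm x).1
  calc ∑ i ∈ range k, sortedDesc a i = ∑ x ∈ T, a x := hT.symm
    _ ≤ ∑ t ∈ B, ∑ i, a (finProdFinEquiv (t, i)) := sum_le_sum_image_fst_sum _ _ ha
    _ = ℓ * ∑ t ∈ B, aggA m ℓ a t := by
        rw [mul_sum]
        refine sum_congr rfl fun t _ => ?_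
        rw [aggA, mul_div_cancel₀ _ (Nat.cast_ne_zero.2 hℓ.ne')]
    _ ≤ ℓ * ∑ i ∈ range k, sortedDesc (aggA m ℓ a) i := by
        gcongr
        exact sum_le_sum_range_sortedDesc (aggA_nonneg ha) (card_image_le.trans hTk)
    _ = ∑ i ∈ range k, ℓ * sortedDesc (aggA m ℓ a) i := mul_sum _ _ _

theorem sum_Iic_le_sum_Iic_aggW (h : m ≤ m * ℓ) {w : Fin (m * ℓ) → ℝ} (hw0 : ∀ i, 0 ≤ w i)
    (t : Fin m) : ∑ i ∈ Iic t, w (Fin.castLE h i) ≤ ∑ i ∈ Iic t, aggW m ℓ w i := by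
  calc ∑ i ∈ Iic t, w (Fin.castLE h i) = ∑ x ∈ (Iic t).map (Fin.castLEEmb h), w x := by
        rw [sum_map]
        rfl
    _ ≤ ∑ s ∈ ((Iic t).map (Fin.castLEEmb h)).image fun x => (finProdFinEquiv.symm x).1,
          aggW m ℓ w s := sum_le_sum_image_fst_sum _ _ hw0
    _ ≤ ∑ i ∈ Iic t, aggW m ℓ w i := by
        refine sum_le_sum_of_subset_of_nonneg ?_ fun s _ _ => sum_nonneg fun _ _ => hw0 _
        intro s hs
        obtain ⟨x, hx, rfl⟩ := mem_image.1 hs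
        obtain ⟨i, hi, rfl⟩ := mem_map.1 hx
        rw [mem_Iic, Fin.le_def] at hi ⊢
        exact (Nat.div_le_self _ _).trans hi

end Aggregation

theorem owa_aggregation_upper_general (m ℓ : ℕ) (hm : 0 < m) (hℓ : 1 ≤ ℓ)
    (a w : Fin (m * ℓ) → ℝ)
    (ha : ∀ k, 0 ≤ a k)
    (hw : Antitone w) (hw0 : ∀ k, 0 ≤ w k)
    (ρ : ℝ)
    (hρ : ρ = Finset.univ.sup'
      (Finset.univ_nonempty_iff.mpr (Fin.pos_iff_nonempty.mp hm))
      (fun t : Fin m =>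
        (∑ i ∈ Finset.Iic t, w (Fin.castLE (Nat.le_mul_of_pos_right m hℓ) i)) /
        (∑ i ∈ Finset.Iic t, aggW m ℓ w i))) :
    OWA w a ≤ (ℓ : ℝ) * ρ * OWA (aggW m ℓ w) (aggA m ℓ a) := by
  have hle : m ≤ m * ℓ := Nat.le_mul_of_pos_right m hℓ
  have hw_prefix : ∀ t, ∑ i ∈ Iic t, w (Fin.castLE hle i) ≤ ρ * ∑ i ∈ Iic t, aggW m ℓ w i := by
    intro t
    have hratio := hρ ▸ le_sup' (fun t : Fin m => (∑ i ∈ Iic t, w (Fin.castLE hle i)) /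
      (∑ i ∈ Iic t, aggW m ℓ w i)) (mem_univ t)
    have hblock := sum_Iic_le_sum_Iic_aggW hle hw0 t
    -- a vanishing denominator makes the ratio a junk `0`, but then the numerator vanishes too
    rcases (sum_nonneg fun i _ => sum_nonneg fun _ _ => hw0 _ :
      0 ≤ ∑ i ∈ Iic t, aggW m ℓ w i).eq_or_lt with hzero | hpos
    · rw [← hzero] at hblock ⊢
      simpa using hblock
    · exact (div_le_iff₀ hpos).1 hratio
  have hagg := aggA_nonneg (m := m) (ℓ := ℓ) ha
  calc OWA w a = ∑ i ∈ range (m * ℓ), padZero w i * sortedDesc a i := OWA_eq_sum_range w a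
    _ ≤ ∑ i ∈ range (m * ℓ), padZero w i * (ℓ * sortedDesc (aggA m ℓ a) i) :=
        sum_mul_le_sum_mul_of_sum_range_le (antitone_padZero hw hw0) (padZero_nonneg hw0)
          fun k _ => sum_range_sortedDesc_le_sum_range_sortedDesc_aggA hℓ ha k
    _ = ∑ i ∈ range m, (ℓ * sortedDesc (aggA m ℓ a) i) * padZero w i := by
        rw [← sum_subset (range_subset_range.2 hle) fun i _ hi => by
          rw [sortedDesc_of_le _ (by simpa using hi), mul_zero, mul_zero]]
        exact sum_congr rfl fun i _ => mul_comm _ _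
    _ ≤ ∑ i ∈ range m, (ℓ * sortedDesc (aggA m ℓ a) i) * (ρ * padZero (aggW m ℓ w) i) :=
        sum_mul_le_sum_mul_of_sum_range_le ((antitone_sortedDesc hagg).const_mul ℓ.cast_nonneg)
          (fun i => mul_nonneg ℓ.cast_nonneg (sortedDesc_nonneg hagg i)) fun k hk => by
            rw [← mul_sum]
            exact sum_range_padZero_le_mul_of_sum_Iic_le hle hw_prefix hk
    _ = ℓ * ρ * OWA (aggW m ℓ w) (aggA m ℓ a) := by
        rw [OWA_eq_sum_range, mul_sum]
        exact sum_congr rfl fun i _ => by ring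

/-- Lemma 3(b): OWA of the original vector is at most `ℓ ρ` times the OWA of
the aggregated vector, where `ρ` is the maximum prefix-sum ratio of the
weights. -/
theorem owa_aggregation_upper (m ℓ : ℕ) (hm : 0 < m) (hℓ : 1 ≤ ℓ)
    (a w : Fin (m * ℓ) → ℝ)
    (ha : ∀ k, 0 ≤ a k) (hane : a ≠ 0)
    (hw : Antitone w) (hw0 : ∀ k, 0 ≤ w k) (hw1 : ∑ k, w k = 1)
    (ρ : ℝ)
    (hρ : ρ = Finset.univ.sup'
      (Finset.univ_nonempty_iff.mpr (Fin.pos_iff_nonempty.mp hm))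
      (fun t : Fin m =>
        (∑ i ∈ Finset.Iic t, w (Fin.castLE (Nat.le_mul_of_pos_right m hℓ) i)) /
        (∑ i ∈ Finset.Iic t, aggW m ℓ w i))) :
    OWA w a ≤ (ℓ : ℝ) * ρ * OWA (aggW m ℓ w) (aggA m ℓ a) :=
  owa_aggregation_upper_general m ℓ hm hℓ a w ha hw hw0 ρ hρ
end

section
/- Let $\pmb{w}$ be a nonincreasing nonnegative weight vector of length $K$ (a multiple of $\ell \geq 2$) that sums to 1, with aggregated weights $\overline{w}_k = \sum_{i=(k-1)\ell+1}^{k\ell} w_i$ and $\rho = \max_{k \in [K/\ell]} \frac{\sum_{i=1}^k w_i}{\sum_{i=1}^k \overline{w}_i}$. Then $\rho = 1$ if and only if $w_1 + w_2 + \dots + w_{K/\ell} = 1$. -/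
/-- `ρ = 1` if and only if the first `K/ℓ` weights sum to exactly 1. -/
theorem rho_eq_one_iff (m ℓ : ℕ) (hm : 0 < m) (hℓ : 2 ≤ ℓ)
    (w : Fin (m * ℓ) → ℝ)
    (hw : Antitone w) (hw0 : ∀ k, 0 ≤ w k) (hw1 : ∑ k, w k = 1)
    (ρ : ℝ)
    (hρ : ρ = Finset.univ.sup'
      (Finset.univ_nonempty_iff.mpr (Fin.pos_iff_nonempty.mp hm))
      (fun t : Fin m =>
        (∑ i ∈ Finset.Iic t,
            w (Fin.castLE (Nat.le_mul_of_pos_right m (by omega)) i)) /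
        (∑ i ∈ Finset.Iic t, aggW m ℓ w i))) :
    ρ = 1 ↔
      (∑ i : Fin m, w (Fin.castLE (Nat.le_mul_of_pos_right m (by omega)) i)) = 1 := by
  have hml : m < m * ℓ := by nlinarith
  set S : ℕ → ℝ := fun a => ∑ j ∈ Finset.univ.filter (fun j : Fin (m*ℓ) => (j:ℕ) < a), w j
    with hSdef
  -- numerator
  have hN : ∀ t : Fin m, (∑ i ∈ Finset.Iic t,
      w (Fin.castLE (Nat.le_mul_of_pos_right m (by omega)) i)) = S ((t:ℕ)+1) := by
    intro t
    refine Finset.sum_bij (fun a _ => Fin.castLE (Nat.le_mul_of_pos_right m (by omega)) a)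
      ?_ ?_ ?_ ?_
    · intro a ha
      simp only [hSdef, Finset.mem_filter, Finset.mem_univ, true_and, Fin.coe_castLE]
      have := Finset.mem_Iic.mp ha
      exact Nat.lt_succ_of_le this
    · intro a _ b _ h
      exact Fin.castLE_injective _ h
    · intro b hb
      simp only [hSdef, Finset.mem_filter, Finset.mem_univ, true_and] at hb
      have hbm : (b:ℕ) < m := by omega
      refine ⟨⟨(b:ℕ), hbm⟩, Finset.mem_Iic.mpr (by rw [Fin.le_def]; simpa using by omega), ?_⟩
      ext; simp
    · intro a _; rfl
  -- denominator
  have hD : ∀ t : Fin m, (∑ i ∈ Finset.Iic t, aggW m ℓ w i) = S (((t:ℕ)+1)*ℓ) := by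
    intro t
    have h1 : (∑ i ∈ Finset.Iic t, aggW m ℓ w i)
        = ∑ p ∈ Finset.Iic t ×ˢ (Finset.univ : Finset (Fin ℓ)), w (finProdFinEquiv p) := by
      rw [Finset.sum_product]
      rfl
    rw [h1]
    refine Finset.sum_bij (fun p _ => finProdFinEquiv p) ?_ ?_ ?_ ?_
    · rintro ⟨k, i⟩ hp
      simp only [Finset.mem_product, Finset.mem_Iic, Fin.le_def] at hp
      simp only [hSdef, Finset.mem_filter, Finset.mem_univ, true_and]
      have hval : ((finProdFinEquiv ((k, i) : Fin m × Fin ℓ)) : ℕ) = (i:ℕ) + ℓ * (k:ℕ) := rfl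
      rw [hval]
      have hk : (k:ℕ) ≤ (t:ℕ) := hp.1
      have hi : (i:ℕ) < ℓ := i.isLt
      nlinarith
    · intro a _ b _ h
      exact finProdFinEquiv.injective h
    · intro b hb
      simp only [hSdef, Finset.mem_filter, Finset.mem_univ, true_and] at hb
      refine ⟨finProdFinEquiv.symm b, ?_, finProdFinEquiv.apply_symm_apply b⟩
      set p := finProdFinEquiv.symm b with hp
      have hbv : ((finProdFinEquiv p) : ℕ) = (p.2:ℕ) + ℓ * (p.1:ℕ) := rfl
      have hb2 : (b:ℕ) = (p.2:ℕ) + ℓ * (p.1:ℕ) := by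
        rw [← hbv, hp, Equiv.apply_symm_apply]
      simp only [Finset.mem_product, Finset.mem_Iic, Finset.mem_univ, and_true, Fin.le_def]
      have hlt : ℓ * (p.1:ℕ) < ℓ * ((t:ℕ)+1) := by
        calc ℓ * (p.1:ℕ) ≤ (p.2:ℕ) + ℓ * (p.1:ℕ) := Nat.le_add_left _ _
          _ < ((t:ℕ)+1)*ℓ := by rw [← hb2]; exact hb
          _ = ℓ * ((t:ℕ)+1) := Nat.mul_comm _ _
      have := Nat.lt_of_mul_lt_mul_left hlt
      omega
    · intro a _; rfl
  -- splitting lemma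
  have hsplit : ∀ a b : ℕ, a ≤ b → S b = S a +
      ∑ j ∈ Finset.univ.filter (fun j : Fin (m*ℓ) => a ≤ (j:ℕ) ∧ (j:ℕ) < b), w j := by
    intro a b hab
    simp only [hSdef]
    rw [← Finset.sum_filter_add_sum_filter_not
      (Finset.univ.filter (fun j : Fin (m*ℓ) => (j:ℕ) < b)) (fun j => (j:ℕ) < a)]
    congr 1
    · apply Finset.sum_congr _ (fun _ _ => rfl)
      ext j
      simp only [Finset.mem_filter, Finset.mem_univ, true_and]
      omega
    · apply Finset.sum_congr _ (fun _ _ => rfl)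
      ext j
      simp only [Finset.mem_filter, Finset.mem_univ, true_and]
      omega
  -- total sum
  have hStot : S (m*ℓ) = 1 := by
    rw [hSdef, ← hw1]
    apply Finset.sum_congr _ (fun _ _ => rfl)
    ext j
    simp [j.isLt]
  -- S monotone
  have hSmono : ∀ a b : ℕ, a ≤ b → S a ≤ S b := by
    intro a b hab
    rw [hsplit a b hab]
    have : 0 ≤ ∑ j ∈ Finset.univ.filter (fun j : Fin (m*ℓ) => a ≤ (j:ℕ) ∧ (j:ℕ) < b), w j :=
      Finset.sum_nonneg (fun j _ => hw0 j)
    linarith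
  -- w 0 positive
  have hw0pos : 0 < w ⟨0, by omega⟩ := by
    rcases lt_or_ge 0 (w ⟨0, by omega⟩) with h | h
    · exact h
    · exfalso
      have hz : ∀ j : Fin (m*ℓ), w j = 0 := by
        intro j
        have hle : w j ≤ w ⟨0, by omega⟩ := hw (by rw [Fin.le_def]; exact Nat.zero_le _)
        have := hw0 j
        linarith
      rw [Finset.sum_congr rfl (fun j _ => hz j)] at hw1
      simp at hw1
  -- S positive for a ≥ 1
  have hSpos : ∀ a : ℕ, 1 ≤ a → 0 < S a := by
    intro a ha
    have hm0 : (⟨0, by omega⟩ : Fin (m*ℓ)) ∈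
        Finset.univ.filter (fun j : Fin (m*ℓ) => (j:ℕ) < a) := by
      simp; omega
    calc 0 < w ⟨0, by omega⟩ := hw0pos
      _ ≤ S a := Finset.single_le_sum (fun j _ => hw0 j) hm0
  -- ρ ≤ 1
  have hub : ρ ≤ 1 := by
    rw [hρ]
    apply Finset.sup'_le
    intro t _
    rw [hN t, hD t]
    have hpos : 0 < S (((t:ℕ)+1)*ℓ) := hSpos _ (by nlinarith)
    rw [div_le_one hpos]
    exact hSmono _ _ (Nat.le_mul_of_pos_right _ (by omega))
  -- the last index
  have hlastlt : m - 1 < m := by omega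
  set t₀ : Fin m := ⟨m-1, hlastlt⟩ with ht₀
  have hIic : Finset.Iic t₀ = Finset.univ := by
    ext i
    simp only [Finset.mem_Iic, Finset.mem_univ, iff_true, Fin.le_def]
    have := i.isLt
    show (i:ℕ) ≤ m - 1
    omega
  have ht₀v : ((t₀:ℕ)+1) = m := by show m - 1 + 1 = m; omega
  have hNfull : (∑ i : Fin m, w (Fin.castLE (Nat.le_mul_of_pos_right m (by omega)) i)) = S m := by
    rw [← hIic, hN t₀, ht₀v]
  constructor
  · -- forward
    intro h1
    obtain ⟨t, _, ht⟩ := Finset.exists_mem_eq_sup'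
      (Finset.univ_nonempty_iff.mpr (Fin.pos_iff_nonempty.mp hm))
      (fun t : Fin m =>
        (∑ i ∈ Finset.Iic t,
            w (Fin.castLE (Nat.le_mul_of_pos_right m (by omega)) i)) /
        (∑ i ∈ Finset.Iic t, aggW m ℓ w i))
    rw [← hρ, h1] at ht
    rw [hN t, hD t] at ht
    have hpos : 0 < S (((t:ℕ)+1)*ℓ) := hSpos _ (by nlinarith)
    have heq : S ((t:ℕ)+1) = S (((t:ℕ)+1)*ℓ) := by
      field_simp at ht
      linarith
    have hle : (t:ℕ)+1 ≤ ((t:ℕ)+1)*ℓ := Nat.le_mul_of_pos_right _ (by omega)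
    have hmid := hsplit ((t:ℕ)+1) (((t:ℕ)+1)*ℓ) hle
    rw [← heq] at hmid
    have hzero : ∀ j ∈ Finset.univ.filter
        (fun j : Fin (m*ℓ) => (t:ℕ)+1 ≤ (j:ℕ) ∧ (j:ℕ) < ((t:ℕ)+1)*ℓ), w j = 0 := by
      have hsum0 : ∑ j ∈ Finset.univ.filter
          (fun j : Fin (m*ℓ) => (t:ℕ)+1 ≤ (j:ℕ) ∧ (j:ℕ) < ((t:ℕ)+1)*ℓ), w j = 0 := by
        linarith
      exact (Finset.sum_eq_zero_iff_of_nonneg (fun j _ => hw0 j)).mp hsum0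
    -- in particular w at index t+1 is zero
    have htp1 : (t:ℕ)+1 < m*ℓ := by
      have := t.isLt
      omega
    have hwt : w ⟨(t:ℕ)+1, htp1⟩ = 0 := by
      apply hzero
      simp only [Finset.mem_filter, Finset.mem_univ, true_and]
      constructor
      · rfl
      · have := t.isLt
        nlinarith
    -- all weights beyond t+1 vanish
    have htail : ∀ j : Fin (m*ℓ), (t:ℕ)+1 ≤ (j:ℕ) → w j = 0 := by
      intro j hj
      have h2 : w j ≤ w ⟨(t:ℕ)+1, htp1⟩ := hw (by rw [Fin.le_def]; exact hj)
      rw [hwt] at h2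
      linarith [hw0 j]
    -- conclude S m = 1
    have hmt : (t:ℕ)+1 ≤ m := t.isLt
    have h2 := hsplit m (m*ℓ) (le_of_lt hml)
    have hmidzero : ∑ j ∈ Finset.univ.filter
        (fun j : Fin (m*ℓ) => m ≤ (j:ℕ) ∧ (j:ℕ) < m*ℓ), w j = 0 := by
      apply Finset.sum_eq_zero
      intro j hj
      simp only [Finset.mem_filter, Finset.mem_univ, true_and] at hj
      exact htail j (by omega)
    rw [hmidzero, hStot] at h2
    rw [hNfull]
    linarith
  · -- backward
    intro h1
    rw [hNfull] at h1
    have hratio : (∑ i ∈ Finset.Iic t₀,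
            w (Fin.castLE (Nat.le_mul_of_pos_right m (by omega)) i)) /
        (∑ i ∈ Finset.Iic t₀, aggW m ℓ w i) = 1 := by
      rw [hN t₀, hD t₀, ht₀v, hStot, h1]
      norm_num
    have hge : (1:ℝ) ≤ ρ := by
      have h := Finset.le_sup' (fun t : Fin m =>
        (∑ i ∈ Finset.Iic t,
            w (Fin.castLE (Nat.le_mul_of_pos_right m (by omega)) i)) /
        (∑ i ∈ Finset.Iic t, aggW m ℓ w i)) (Finset.mem_univ t₀)
      rw [hratio] at h
      rw [hρ]; exact h
    linarith
end

section
/- Let $\mathcal{X}$ be a finite nonempty set of feasible solutions, $F : \mathcal{X} \to \mathbb{R}_{\geq 0}^K$, $\pmb{w}$ a nonincreasing nonnegative weight vector summing to 1, $K$ a multiple of $\ell$. Define $\overline{F}(\pmb{x})$ and $\overline{\pmb{w}}$ by block-averaging/summing as in the $\ell$-aggregation. If $\overline{\pmb{x}}$ minimizes $\mathrm{OWA}_{\overline{\pmb{w}}}(\overline{F}(\pmb{x}))$ over $\mathcal{X}$, then for every $\pmb{x} \in \mathcal{X}$: $\mathrm{OWA}_{\pmb{w}}(F(\overline{\pmb{x}}))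 \leq \ell\rho \cdot \mathrm{OWA}_{\pmb{w}}(F(\pmb{x}))$, where $\rho = \max_{k \in [K/\ell]} \frac{\sum_{i=1}^k w_i}{\sum_{i=1}^k \overline{w}_i}$. -/
namespace OWAProof

open Finset

/-- Extension of a finite vector to `ℕ`, by zero. -/
noncomputable def ext {N : ℕ} (g : Fin N → ℝ) : ℕ → ℝ :=
  fun k => if h : k < N then g ⟨k, h⟩ else 0

theorem ext_nonneg {N : ℕ} {g : Fin N → ℝ} (hg : ∀ t, 0 ≤ g t) (k : ℕ) : 0 ≤ ext g k := by
  unfold ext; split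
  · exact hg _
  · exact le_refl _

theorem sum_ext_mul {N : ℕ} (f g : Fin N → ℝ) :
    ∑ k ∈ range N, ext f k * ext g k = ∑ i, f i * g i := by
  rw [← Fin.sum_univ_eq_sum_range (fun k => ext f k * ext g k) N]
  exact Finset.sum_congr rfl fun i _ => by simp [ext]

theorem sum_ext {N : ℕ} (g : Fin N → ℝ) : ∑ k ∈ range N, ext g k = ∑ i, g i := by
  rw [← Fin.sum_univ_eq_sum_range (fun k => ext g k) N]
  exact Finset.sum_congr rfl fun i _ => by simp [ext]

theorem sorted_antitone {N : ℕ} (a : Fin N → ℝ) :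
    Antitone (fun k => a (Tuple.sort (fun i => -a i) k)) := by
  have h := Tuple.monotone_sort (fun i => -a i)
  intro i j hij
  have := h hij
  simpa using this

/-- Abel-summation core: a nonnegative antitone weight against a sequence with
nonnegative prefix sums gives a nonnegative sum. -/
theorem abelCore : ∀ (n : ℕ) (c d : ℕ → ℝ),
    (∀ i j, i ≤ j → j < n → c j ≤ c i) → (∀ i, i < n → 0 ≤ c i) →
    (∀ j, j ≤ n → 0 ≤ ∑ k ∈ Finset.range j, d k) →
    0 ≤ ∑ k ∈ Finset.range n, c k * d k := by
  intro n
  induction n with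
  | zero => simp
  | succ n ih =>
    intro c d hmono hc hd
    have h1 : 0 ≤ ∑ k ∈ Finset.range n, (c k - c n) * d k :=
      ih _ _ (fun i j hij hj => by
          have := hmono i j hij (hj.trans n.lt_succ_self); linarith)
        (fun i hi => by
          linarith [hmono i n hi.le n.lt_succ_self, hc n n.lt_succ_self])
        (fun j hj => hd j (hj.trans n.le_succ))
    have h2 : 0 ≤ c n * ∑ k ∈ Finset.range (n+1), d k :=
      mul_nonneg (hc n n.lt_succ_self) (hd (n+1) le_rfl)
    have key : ∑ k ∈ Finset.range (n+1), c k * d k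
        = ∑ k ∈ Finset.range n, (c k - c n) * d k + c n * ∑ k ∈ Finset.range (n+1), d k := by
      have e1 : ∀ k, (c k - c n) * d k = c k * d k - c n * d k := fun k => by ring
      simp_rw [e1]
      rw [Finset.sum_sub_distrib, Finset.mul_sum, Finset.sum_range_succ,
        Finset.sum_range_succ (f := fun k => c n * d k)]
      ring
    linarith

theorem weighted_le (n : ℕ) (c g h : ℕ → ℝ)
    (hmono : ∀ i j, i ≤ j → j < n → c j ≤ c i) (hc : ∀ i, i < n → 0 ≤ c i)
    (hpre : ∀ j, j ≤ n → ∑ k ∈ Finset.range j, g k ≤ ∑ k ∈ Finset.range j, h k) :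
    ∑ k ∈ Finset.range n, c k * g k ≤ ∑ k ∈ Finset.range n, c k * h k := by
  have h0 := abelCore n c (fun k => h k - g k) hmono hc (fun j hj => by
    have := hpre j hj
    rw [Finset.sum_sub_distrib]; linarith)
  have e : ∑ k ∈ Finset.range n, c k * (h k - g k)
      = ∑ k ∈ Finset.range n, c k * h k - ∑ k ∈ Finset.range n, c k * g k := by
    rw [← Finset.sum_sub_distrib]
    exact Finset.sum_congr rfl fun k _ => by ring
  rw [e] at h0
  linarith

/-- A sum of an antitone nonnegative vector over any `j`-element set is at most the
sum of its first `j` values. -/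
theorem sum_le_top {N : ℕ} (s : Fin N → ℝ) (hs : Antitone s) (hs0 : ∀ t, 0 ≤ s t)
    (R : Finset (Fin N)) (j : ℕ) (hj : R.card ≤ j) :
    ∑ t ∈ R, s t ≤ ∑ k ∈ Finset.range j, ext s k := by
  have hrN : R.card ≤ N := by
    have := Finset.card_le_univ R
    simpa using this
  set emb := R.orderEmbOfFin (rfl : R.card = R.card) with hemb
  have hle : ∀ (k : ℕ) (hk : k < R.card), k ≤ (emb ⟨k, hk⟩ : ℕ) := by
    intro k
    induction k with
    | zero => intro hk; exact Nat.zero_le _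
    | succ k ihk =>
      intro hk
      have hk' : k < R.card := Nat.lt_of_succ_lt hk
      have hlt : (emb ⟨k, hk'⟩ : Fin N) < emb ⟨k+1, hk⟩ :=
        emb.strictMono (by exact Fin.mk_lt_mk.2 k.lt_succ_self)
      have h3 := ihk hk'
      have h4 : (k:ℕ) < (emb ⟨k+1, hk⟩ : ℕ) := lt_of_le_of_lt h3 hlt
      omega
  have hRimage : R = Finset.image (fun i : Fin R.card => emb i) Finset.univ := by
    ext t
    simp only [Finset.mem_image, Finset.mem_univ, true_and]
    constructor
    · intro ht
      have : t ∈ Set.range emb := by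
        rw [Finset.range_orderEmbOfFin]
        exact ht
      obtain ⟨i, hi⟩ := this
      exact ⟨i, hi⟩
    · rintro ⟨i, rfl⟩
      exact Finset.orderEmbOfFin_mem R rfl i
  have h1 : ∑ t ∈ R, s t = ∑ i : Fin R.card, s (emb i) := by
    conv_lhs => rw [hRimage]
    rw [Finset.sum_image (fun i _ i' _ hii' => emb.injective hii')]
  have h2 : ∀ i : Fin R.card, s (emb i) ≤ ext s i := by
    intro i
    have hiN : (i : ℕ) < N := lt_of_lt_of_le i.2 hrN
    have hmk : (⟨i, hiN⟩ : Fin N) ≤ emb i := by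
      rw [Fin.le_def]
      simpa using hle i i.2
    have := hs hmk
    unfold ext
    rw [dif_pos hiN]
    exact this
  calc ∑ t ∈ R, s t = ∑ i : Fin R.card, s (emb i) := h1
    _ ≤ ∑ i : Fin R.card, ext s i := Finset.sum_le_sum fun i _ => h2 i
    _ = ∑ k ∈ Finset.range R.card, ext s k := Fin.sum_univ_eq_sum_range _ _
    _ ≤ ∑ k ∈ Finset.range j, ext s k := Finset.sum_le_sum_of_subset_of_nonneg
        (Finset.range_subset_range.2 hj) (fun k _ _ => ext_nonneg hs0 k)

theorem sum_Iic_ext {M : ℕ} (g : Fin M → ℝ) (t : ℕ) (ht : t < M) :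
    ∑ i ∈ Finset.Iic (⟨t, ht⟩ : Fin M), g i = ∑ k ∈ Finset.range (t+1), ext g k := by
  refine Finset.sum_nbij' (i := fun (i : Fin M) => (i : ℕ))
    (j := fun k => if h : k < M then (⟨k, h⟩ : Fin M) else ⟨t, ht⟩) ?_ ?_ ?_ ?_ ?_
  · intro i hi
    simp only [Finset.mem_Iic, Fin.le_def] at hi
    simp only [Finset.mem_range]
    omega
  · intro k hk
    simp only [Finset.mem_range] at hk
    have hkM : k < M := by omega
    simp only [dif_pos hkM, Finset.mem_Iic, Fin.le_def]
    omega
  · intro i hi; simp [i.isLt]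
  · intro k hk
    simp only [Finset.mem_range] at hk
    have hkM : k < M := by omega
    simp [hkM]
  · intro i hi
    simp [ext, i.isLt]

theorem lower_bound (m ℓ : ℕ) (hℓ : 1 ≤ ℓ)
    (a : Fin (m*ℓ) → ℝ)
    (w : Fin (m*ℓ) → ℝ) (hw : Antitone w) :
    OWA (aggW m ℓ w) (aggA m ℓ a) ≤ OWA w a := by
  classical
  have hℓR : (0:ℝ) < ℓ := by exact_mod_cast hℓ
  set e := (finProdFinEquiv : Fin m × Fin ℓ ≃ Fin (m*ℓ)) with he
  set τ := Tuple.sort (fun t => -aggA m ℓ a t) with hτ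
  set σ := Tuple.sort (fun i => -a i) with hσ
  set u : Fin m → Fin ℓ → ℝ := fun t i => w (e (t, i)) with hu
  set v : Fin m → Fin ℓ → ℝ := fun t i => a (e (τ t, i)) with hv
  set φ : Fin m → Equiv.Perm (Fin ℓ) := fun t => Tuple.sort (fun i => -(u t) i) with hφ
  set ψ : Fin m → Equiv.Perm (Fin ℓ) := fun t => Tuple.sort (fun i => -(v t) i) with hψ
  have cheb : ∀ t, aggW m ℓ w t * aggA m ℓ a (τ t)
      ≤ ∑ i, u t (φ t i) * v t (ψ t i) := by
    intro t
    have hut : Antitone (fun i => u t (φ t i)) := sorted_antitone (u t)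
    have hvt : Antitone (fun i => v t (ψ t i)) := sorted_antitone (v t)
    have hch := (hut.monovary hvt).sum_mul_sum_le_card_mul_sum
    rw [Equiv.sum_comp (φ t) (u t), Equiv.sum_comp (ψ t) (v t), Fintype.card_fin] at hch
    have hW : aggW m ℓ w t = ∑ i, u t i := rfl
    have hA : aggA m ℓ a (τ t) = (∑ i, v t i) / ℓ := rfl
    rw [hW, hA]
    rw [mul_div_assoc']
    rw [div_le_iff₀ hℓR]
    calc (∑ i, u t i) * (∑ i, v t i) ≤ (ℓ:ℝ) * ∑ i, u t (φ t i) * v t (ψ t i) := hch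
      _ = (∑ i, u t (φ t i) * v t (ψ t i)) * ℓ := by ring
  set mid : Equiv.Perm (Fin m × Fin ℓ) :=
    { toFun := fun p => (τ p.1, ψ p.1 ((φ p.1).symm p.2)),
      invFun := fun q => (τ.symm q.1, φ (τ.symm q.1) ((ψ (τ.symm q.1)).symm q.2)),
      left_inv := by intro p; simp,
      right_inv := by intro q; simp } with hmid
  set Pi : Equiv.Perm (Fin (m*ℓ)) := e.symm.trans (mid.trans e) with hPi
  have step2 : ∑ t, ∑ i, u t (φ t i) * v t (ψ t i) = ∑ k, w k * a (Pi k) := by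
    rw [← Equiv.sum_comp e (fun k => w k * a (Pi k)), Fintype.sum_prod_type]
    refine Finset.sum_congr rfl fun t _ => ?_
    have hPie : ∀ y, Pi (e (t, y)) = e (τ t, ψ t ((φ t).symm y)) := by
      intro y; simp [hPi, hmid]
    simp_rw [hPie]
    rw [← Equiv.sum_comp (φ t)
      (fun i => w (e (t, i)) * a (e (τ t, ψ t ((φ t).symm i))))]
    refine Finset.sum_congr rfl fun i _ => ?_
    simp [hu, hv]
  have rearr : ∑ k, w k * a (Pi k) ≤ OWA w a := by
    have hwa : Monovary w (fun k => a (σ k)) := hw.monovary (sorted_antitone a)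
    have h5 := hwa.sum_mul_comp_perm_le_sum_mul (σ := Pi.trans σ.symm)
    rw [OWA]
    calc ∑ k, w k * a (Pi k)
        = ∑ k, w k * (fun k => a (σ k)) ((Pi.trans σ.symm) k) := by
          refine Finset.sum_congr rfl fun k _ => ?_
          simp
      _ ≤ ∑ k, w k * a (σ k) := h5
  have howa : OWA (aggW m ℓ w) (aggA m ℓ a) = ∑ t, aggW m ℓ w t * aggA m ℓ a (τ t) := rfl
  calc OWA (aggW m ℓ w) (aggA m ℓ a) = ∑ t, aggW m ℓ w t * aggA m ℓ a (τ t) := howa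
    _ ≤ ∑ t, ∑ i, u t (φ t i) * v t (ψ t i) := Finset.sum_le_sum fun t _ => cheb t
    _ = ∑ k, w k * a (Pi k) := step2
    _ ≤ OWA w a := rearr

theorem upper_bound (m ℓ : ℕ) (hm : 0 < m) (hℓ : 1 ≤ ℓ)
    (a : Fin (m*ℓ) → ℝ) (ha : ∀ k, 0 ≤ a k)
    (w : Fin (m*ℓ) → ℝ) (hw : Antitone w) (hw0 : ∀ k, 0 ≤ w k)
    (ρ : ℝ) (hmN : m ≤ m * ℓ)
    (hρ1 : ∀ t : Fin m, ∑ i ∈ Finset.Iic t, w (Fin.castLE hmN i)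
        ≤ ρ * ∑ i ∈ Finset.Iic t, aggW m ℓ w i) :
    OWA w a ≤ (ℓ:ℝ) * ρ * OWA (aggW m ℓ w) (aggA m ℓ a) := by
  classical
  have hℓR : (0:ℝ) < ℓ := by exact_mod_cast hℓ
  have hℓ0 : (ℓ:ℝ) ≠ 0 := ne_of_gt hℓR
  set e := (finProdFinEquiv : Fin m × Fin ℓ ≃ Fin (m*ℓ)) with he
  set σ := Tuple.sort (fun i => -a i) with hσ
  set α : Fin (m*ℓ) → ℝ := fun k => a (σ k) with hα
  have hαmono : Antitone α := sorted_antitone a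
  have hα0 : ∀ k, 0 ≤ α k := fun k => ha _
  set τ := Tuple.sort (fun t => -aggA m ℓ a t) with hτ
  set β : Fin m → ℝ := fun t => aggA m ℓ a (τ t) with hβ
  have hβmono : Antitone β := sorted_antitone (aggA m ℓ a)
  have hagg0 : ∀ b, 0 ≤ aggA m ℓ a b := fun b =>
    div_nonneg (Finset.sum_nonneg fun i _ => ha _) (le_of_lt hℓR)
  have hβ0 : ∀ t, 0 ≤ β t := fun t => hagg0 _
  set h : ℕ → ℝ := fun k => (ℓ:ℝ) * ext β k with hh
  -- sum over any set of entries is bounded using sorted block averages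
  have block_bound : ∀ Q : Finset (Fin (m*ℓ)),
      ∑ t ∈ Q, a t ≤ (ℓ:ℝ) * ∑ k ∈ Finset.range Q.card, ext β k := by
    intro Q
    set Bl : Finset (Fin m) := Q.image (fun t => (e.symm t).1) with hBl
    have heq : ∑ t ∈ Finset.univ.filter (fun t => (e.symm t).1 ∈ Bl), a t
        = ∑ b ∈ Bl, ∑ i : Fin ℓ, a (e (b, i)) := by
      rw [Finset.sum_filter,
        ← Equiv.sum_comp e (fun t => if (e.symm t).1 ∈ Bl then a t else 0),
        Fintype.sum_prod_type]
      have e1 : ∀ b : Fin m, ∑ i : Fin ℓ, (if ((e.symm (e (b, i))).1 ∈ Bl) then a (e (b, i)) else 0)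
          = if b ∈ Bl then ∑ i : Fin ℓ, a (e (b, i)) else 0 := by
        intro b
        by_cases hb : b ∈ Bl <;> simp [hb]
      rw [Finset.sum_congr rfl fun b _ => e1 b]
      rw [Finset.sum_ite_mem, Finset.univ_inter]
    have hsub : ∑ t ∈ Q, a t ≤ ∑ b ∈ Bl, ∑ i : Fin ℓ, a (e (b, i)) := by
      rw [← heq]
      refine Finset.sum_le_sum_of_subset_of_nonneg (fun t ht => ?_) (fun t _ _ => ha t)
      simp only [Finset.mem_filter, Finset.mem_univ, true_and]
      exact Finset.mem_image_of_mem _ ht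
    have h2 : ∑ b ∈ Bl, ∑ i : Fin ℓ, a (e (b, i)) = (ℓ:ℝ) * ∑ b ∈ Bl, aggA m ℓ a b := by
      rw [Finset.mul_sum]
      refine Finset.sum_congr rfl fun b _ => ?_
      have : (ℓ:ℝ) * ((∑ i : Fin ℓ, a (e (b, i))) / ℓ) = ∑ i : Fin ℓ, a (e (b, i)) := by
        field_simp
      exact this.symm
    have h3 : ∑ b ∈ Bl, aggA m ℓ a b = ∑ x ∈ Bl.map τ.symm.toEmbedding, β x := by
      rw [Finset.sum_map]
      refine Finset.sum_congr rfl fun b _ => ?_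
      simp [hβ]
    have h4 : ∑ x ∈ Bl.map τ.symm.toEmbedding, β x ≤ ∑ k ∈ Finset.range Q.card, ext β k := by
      refine sum_le_top β hβmono hβ0 _ _ ?_
      rw [Finset.card_map]
      exact Finset.card_image_le
    calc ∑ t ∈ Q, a t ≤ ∑ b ∈ Bl, ∑ i : Fin ℓ, a (e (b, i)) := hsub
      _ = (ℓ:ℝ) * ∑ b ∈ Bl, aggA m ℓ a b := h2
      _ = (ℓ:ℝ) * ∑ x ∈ Bl.map τ.symm.toEmbedding, β x := by rw [h3]
      _ ≤ (ℓ:ℝ) * ∑ k ∈ Finset.range Q.card, ext β k :=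
          mul_le_mul_of_nonneg_left h4 (le_of_lt hℓR)
  have total : ∑ k, a k = (ℓ:ℝ) * ∑ k ∈ Finset.range m, ext β k := by
    calc ∑ k, a k = ∑ p : Fin m × Fin ℓ, a (e p) := (Equiv.sum_comp e a).symm
      _ = ∑ b, ∑ i, a (e (b, i)) := Fintype.sum_prod_type _
      _ = ∑ b, (ℓ:ℝ) * aggA m ℓ a b := by
          refine Finset.sum_congr rfl fun b _ => ?_
          have : (ℓ:ℝ) * ((∑ i : Fin ℓ, a (e (b, i))) / ℓ) = ∑ i : Fin ℓ, a (e (b, i)) := by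
            field_simp
          exact this.symm
      _ = (ℓ:ℝ) * ∑ b, aggA m ℓ a b := by rw [Finset.mul_sum]
      _ = (ℓ:ℝ) * ∑ t, β t := by rw [Equiv.sum_comp τ (aggA m ℓ a)]
      _ = (ℓ:ℝ) * ∑ k ∈ Finset.range m, ext β k := by rw [sum_ext β]
  have hsumh : ∀ J, ∑ k ∈ Finset.range J, h k = (ℓ:ℝ) * ∑ k ∈ Finset.range J, ext β k := by
    intro J; rw [Finset.mul_sum]
  have hpre : ∀ j, j ≤ m*ℓ → ∑ k ∈ Finset.range j, ext α k ≤ ∑ k ∈ Finset.range j, h k := by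
    intro j hj
    by_cases hjm : j ≤ m
    · set Q : Finset (Fin (m*ℓ)) :=
        Finset.image (fun i : Fin j => σ (Fin.castLE hj i)) Finset.univ with hQ
      have hinj : Function.Injective (fun i : Fin j => σ (Fin.castLE hj i)) :=
        σ.injective.comp (Fin.castLE_injective hj)
      have hQcard : Q.card = j := by
        rw [Finset.card_image_of_injective _ hinj]
        simp
      have hQsum : ∑ t ∈ Q, a t = ∑ k ∈ Finset.range j, ext α k := by
        rw [Finset.sum_image (fun i _ i' _ hii' => hinj hii')]
        rw [← Fin.sum_univ_eq_sum_range (fun k => ext α k) j]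
        refine Finset.sum_congr rfl fun i _ => ?_
        have hiN : (i:ℕ) < m*ℓ := lt_of_lt_of_le i.2 hj
        simp only [ext, hiN, dif_pos]
        rfl
      have hbb := block_bound Q
      rw [hQcard, hQsum] at hbb
      rw [hsumh j]
      exact hbb
    · push_neg at hjm
      calc ∑ k ∈ Finset.range j, ext α k ≤ ∑ k ∈ Finset.range (m*ℓ), ext α k :=
            Finset.sum_le_sum_of_subset_of_nonneg (Finset.range_subset_range.2 hj)
              (fun k _ _ => ext_nonneg hα0 k)
        _ = ∑ k, α k := sum_ext α
        _ = ∑ k, a k := Equiv.sum_comp σ a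
        _ = (ℓ:ℝ) * ∑ k ∈ Finset.range m, ext β k := total
        _ = ∑ k ∈ Finset.range m, h k := (hsumh m).symm
        _ = ∑ k ∈ Finset.range j, h k := by
              refine Finset.sum_subset (Finset.range_subset_range.2 hjm.le) fun k _ hk => ?_
              have hkm : ¬ k < m := by simpa using hk
              simp [hh, ext, hkm]
  have step1 : OWA w a ≤ ∑ k ∈ Finset.range (m*ℓ), ext w k * h k := by
    have howa : OWA w a = ∑ i, w i * α i := rfl
    rw [howa, ← sum_ext_mul w α]
    exact weighted_le (m*ℓ) (ext w) (ext α) h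
      (fun i j hij hjN => by
        simp only [ext]
        rw [dif_pos hjN, dif_pos (lt_of_le_of_lt hij hjN)]
        exact hw (Fin.mk_le_mk.2 hij))
      (fun i _ => ext_nonneg hw0 i) hpre
  have stepB : ∑ k ∈ Finset.range (m*ℓ), ext w k * h k
      = ∑ t : Fin m, w (Fin.castLE hmN t) * ((ℓ:ℝ) * β t) := by
    have e1 : ∑ k ∈ Finset.range m, ext w k * h k
        = ∑ k ∈ Finset.range (m*ℓ), ext w k * h k := by
      refine Finset.sum_subset (Finset.range_subset_range.2 hmN) fun k _ hk => ?_
      have hkm : ¬ k < m := by simpa using hk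
      simp [hh, ext, hkm]
    rw [← e1, ← Fin.sum_univ_eq_sum_range (fun k => ext w k * h k) m]
    refine Finset.sum_congr rfl fun t _ => ?_
    have h1 : (t:ℕ) < m*ℓ := lt_of_lt_of_le t.2 hmN
    simp only [hh, ext, dif_pos h1, dif_pos t.2]
    rfl
  have key2 : ∑ t : Fin m, w (Fin.castLE hmN t) * β t
      ≤ ρ * ∑ t : Fin m, aggW m ℓ w t * β t := by
    set w' : Fin m → ℝ := fun t => w (Fin.castLE hmN t) with hw'
    have h0 := abelCore m (ext β) (fun k => ρ * ext (aggW m ℓ w) k - ext w' k)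
      (fun i j hij hjm => by
        simp only [ext]
        rw [dif_pos hjm, dif_pos (lt_of_le_of_lt hij hjm)]
        exact hβmono (Fin.mk_le_mk.2 hij))
      (fun i _ => ext_nonneg hβ0 i)
      (fun j hjm => by
        rcases Nat.eq_zero_or_pos j with rfl | hj0
        · simp
        · have hjt : j - 1 < m := by omega
          have hIw' : ∑ i ∈ Finset.Iic (⟨j-1, hjt⟩ : Fin m), w' i
              = ∑ k ∈ Finset.range j, ext w' k := by
            have := sum_Iic_ext w' (j-1) hjt
            rwa [Nat.sub_add_cancel hj0] at this
          have hIagg : ∑ i ∈ Finset.Iic (⟨j-1, hjt⟩ : Fin m), aggW m ℓ w i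
              = ∑ k ∈ Finset.range j, ext (aggW m ℓ w) k := by
            have := sum_Iic_ext (aggW m ℓ w) (j-1) hjt
            rwa [Nat.sub_add_cancel hj0] at this
          have hr := hρ1 ⟨j-1, hjt⟩
          rw [Finset.sum_sub_distrib]
          have e2 : ∑ k ∈ Finset.range j, ρ * ext (aggW m ℓ w) k
              = ρ * ∑ k ∈ Finset.range j, ext (aggW m ℓ w) k := by rw [Finset.mul_sum]
          rw [e2, ← hIagg, ← hIw']
          have : ∑ i ∈ Finset.Iic (⟨j-1, hjt⟩ : Fin m), w' i
              = ∑ i ∈ Finset.Iic (⟨j-1, hjt⟩ : Fin m), w (Fin.castLE hmN i) := rfl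
          linarith [hr, this.ge])
    have e3 : ∑ k ∈ Finset.range m, ext β k * (ρ * ext (aggW m ℓ w) k - ext w' k)
        = ρ * ∑ k ∈ Finset.range m, ext β k * ext (aggW m ℓ w) k
          - ∑ k ∈ Finset.range m, ext β k * ext w' k := by
      rw [Finset.mul_sum, ← Finset.sum_sub_distrib]
      exact Finset.sum_congr rfl fun k _ => by ring
    rw [e3, sum_ext_mul β (aggW m ℓ w), sum_ext_mul β w'] at h0
    have c1 : ∑ i, β i * aggW m ℓ w i = ∑ t, aggW m ℓ w t * β t :=
      Finset.sum_congr rfl fun t _ => mul_comm _ _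
    have c2 : ∑ i, β i * w' i = ∑ t, w' t * β t :=
      Finset.sum_congr rfl fun t _ => mul_comm _ _
    rw [c1, c2] at h0
    linarith
  have hOWAagg : OWA (aggW m ℓ w) (aggA m ℓ a) = ∑ t, aggW m ℓ w t * β t := rfl
  calc OWA w a ≤ ∑ k ∈ Finset.range (m*ℓ), ext w k * h k := step1
    _ = ∑ t : Fin m, w (Fin.castLE hmN t) * ((ℓ:ℝ) * β t) := stepB
    _ = (ℓ:ℝ) * ∑ t, w (Fin.castLE hmN t) * β t := by
        rw [Finset.mul_sum]
        exact Finset.sum_congr rfl fun t _ => by ring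
    _ ≤ (ℓ:ℝ) * (ρ * ∑ t, aggW m ℓ w t * β t) :=
        mul_le_mul_of_nonneg_left key2 (le_of_lt hℓR)
    _ = (ℓ:ℝ) * ρ * OWA (aggW m ℓ w) (aggA m ℓ a) := by rw [hOWAagg]; ring

end OWAProof

/-- The ℓ-aggregation algorithm guarantee: an optimal solution of the
aggregated problem is an `ℓ ρ`-approximate solution of the original OWA
problem. -/
theorem aggregation_algorithm_guarantee (X : Type*) [Fintype X] [Nonempty X]
    (m ℓ : ℕ) (hm : 0 < m) (hℓ : 1 ≤ ℓ)
    (F : X → Fin (m * ℓ) → ℝ) (hF : ∀ x k, 0 ≤ F x k)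
    (w : Fin (m * ℓ) → ℝ)
    (hw : Antitone w) (hw0 : ∀ k, 0 ≤ w k) (hw1 : ∑ k, w k = 1)
    (ρ : ℝ)
    (hρ : ρ = Finset.univ.sup'
      (Finset.univ_nonempty_iff.mpr (Fin.pos_iff_nonempty.mp hm))
      (fun t : Fin m =>
        (∑ i ∈ Finset.Iic t, w (Fin.castLE (Nat.le_mul_of_pos_right m hℓ) i)) /
        (∑ i ∈ Finset.Iic t, aggW m ℓ w i)))
    (xbar : X)
    (hopt : ∀ x : X, OWA (aggW m ℓ w) (aggA m ℓ (F xbar))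
      ≤ OWA (aggW m ℓ w) (aggA m ℓ (F x))) :
    ∀ x : X, OWA w (F xbar) ≤ (ℓ : ℝ) * ρ * OWA w (F x) := by
  intro x
  have hNpos : 0 < m * ℓ := Nat.mul_pos hm hℓ
  have hw0pos : 0 < w ⟨0, hNpos⟩ := by
    by_contra hcon
    push_neg at hcon
    have hall : ∀ k, w k = 0 := fun k =>
      le_antisymm (le_trans (hw (by rw [Fin.le_def]; exact Nat.zero_le _)) hcon) (hw0 k)
    rw [Finset.sum_congr rfl (fun k _ => hall k)] at hw1
    simp at hw1
  have haggW0 : ∀ t, 0 ≤ aggW m ℓ w t := fun t => Finset.sum_nonneg fun i _ => hw0 _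
  have hden : ∀ t : Fin m, 0 < ∑ i ∈ Finset.Iic t, aggW m ℓ w i := by
    intro t
    refine Finset.sum_pos' (fun i _ => haggW0 i) ⟨⟨0, hm⟩, ?_, ?_⟩
    · simp only [Finset.mem_Iic, Fin.le_def]
      exact Nat.zero_le _
    · refine Finset.sum_pos' (fun i _ => hw0 _) ⟨⟨0, hℓ⟩, Finset.mem_univ _, ?_⟩
      have : finProdFinEquiv ((⟨0, hm⟩ : Fin m), (⟨0, hℓ⟩ : Fin ℓ)) = (⟨0, hNpos⟩ : Fin (m*ℓ)) := by
        apply Fin.ext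
        simp [finProdFinEquiv]
      rw [this]
      exact hw0pos
  have hρ1 : ∀ t : Fin m, ∑ i ∈ Finset.Iic t, w (Fin.castLE (Nat.le_mul_of_pos_right m hℓ) i)
      ≤ ρ * ∑ i ∈ Finset.Iic t, aggW m ℓ w i := by
    intro t
    have hle : (∑ i ∈ Finset.Iic t, w (Fin.castLE (Nat.le_mul_of_pos_right m hℓ) i)) /
        (∑ i ∈ Finset.Iic t, aggW m ℓ w i) ≤ ρ := by
      rw [hρ]
      exact Finset.le_sup'
        (fun t : Fin m =>
          (∑ i ∈ Finset.Iic t, w (Fin.castLE (Nat.le_mul_of_pos_right m hℓ) i)) /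
          (∑ i ∈ Finset.Iic t, aggW m ℓ w i))
        (Finset.mem_univ t)
    rw [div_le_iff₀ (hden t)] at hle
    linarith
  have hρ0 : 0 ≤ ρ := by
    rw [hρ]
    refine le_trans ?_ (Finset.le_sup'
      (fun t : Fin m =>
        (∑ i ∈ Finset.Iic t, w (Fin.castLE (Nat.le_mul_of_pos_right m hℓ) i)) /
        (∑ i ∈ Finset.Iic t, aggW m ℓ w i))
      (Finset.mem_univ (⟨0, hm⟩ : Fin m)))
    exact div_nonneg (Finset.sum_nonneg fun i _ => hw0 _) (le_of_lt (hden _))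
  have hub := OWAProof.upper_bound m ℓ hm hℓ (F xbar) (hF xbar) w hw hw0 ρ
    (Nat.le_mul_of_pos_right m hℓ) hρ1
  have hlb := OWAProof.lower_bound m ℓ hℓ (F x) w hw
  have hmul : (0:ℝ) ≤ (ℓ:ℝ) * ρ := mul_nonneg (by positivity) hρ0
  calc OWA w (F xbar) ≤ (ℓ:ℝ) * ρ * OWA (aggW m ℓ w) (aggA m ℓ (F xbar)) := hub
    _ ≤ (ℓ:ℝ) * ρ * OWA (aggW m ℓ w) (aggA m ℓ (F x)) :=
        mul_le_mul_of_nonneg_left (hopt x) hmul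
    _ ≤ (ℓ:ℝ) * ρ * OWA w (F x) := mul_le_mul_of_nonneg_left hlb hmul
end

section
/- Let $\mathcal{X}$ be a finite nonempty feasible set, $c_1,\dots,c_K : \mathcal{X} \to \mathbb{R}_{\geq 0}$ cost functions, and $\lambda \in [0,1]$. Define $H(\pmb{x}) = \lambda \max_k c_k(\pmb{x}) + (1-\lambda)\min_i c_i(\pmb{x})$. Suppose for each $i \in [K]$, $\pmb{x}_i \in \mathcal{X}$ is an $\alpha$-approximate solution ($\alpha \geq 1$) for the min-max problem $\min_{\pmb{x}} \max_k (\lambda c_k(\pmb{x}) + (1-\lambda) c_i(\pmb{x}))$, i.e., $\max_k (\lambda c_k(\pmb{x}_i) + (1-\lambda)c_i(\pmb{x}_i)) \leq \alpha \min_{\pmb{x}} \max_k (\lambda c_k(\pmb{x}) + (1-\lambda)c_i(\pmb{x}))$. Then the best among $\pmb{x}_1,\dots,\pmb{x}_K$ with respect to $H$ satisfies $\min_{i} H(\pmb{x}_i) \leq \alpha \min_{\pmb{x} \in \mathcal{X}} H(\pmb{x})$. -/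
/-- The universal finset of `Fin K` is nonempty when `0 < K`. -/
def neFin {K : ℕ} (hK : 0 < K) : (Finset.univ : Finset (Fin K)).Nonempty :=
  Finset.univ_nonempty_iff.mpr (Fin.pos_iff_nonempty.mp hK)

/-- Theorem 7: if for each `i` an `α`-approximate solution `xs i` of the
min-max subproblem with costs `λ c k + (1-λ) c i` is available, then the best
of them w.r.t. the Hurwicz criterion `H` is an `α`-approximate solution for
the Hurwicz problem. -/
theorem hurwicz_approximation (X : Type*) [Fintype X] [Nonempty X]
    (K : ℕ) (hK : 0 < K)
    (c : Fin K → X → ℝ) (hc : ∀ k x, 0 ≤ c k x)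
    (lam : ℝ) (h0 : 0 ≤ lam) (h1 : lam ≤ 1)
    (α : ℝ) (hα : 1 ≤ α)
    (xs : Fin K → X)
    (happrox : ∀ i : Fin K,
      Finset.univ.sup' (neFin hK)
          (fun k => lam * c k (xs i) + (1 - lam) * c i (xs i))
        ≤ α * Finset.univ.inf' Finset.univ_nonempty (fun x : X =>
            Finset.univ.sup' (neFin hK)
              (fun k => lam * c k x + (1 - lam) * c i x))) :
    Finset.univ.inf' (neFin hK) (fun i =>
        lam * Finset.univ.sup' (neFin hK) (fun k => c k (xs i))
          + (1 - lam) * Finset.univ.inf' (neFin hK) (fun k => c k (xs i)))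
      ≤ α * Finset.univ.inf' Finset.univ_nonempty (fun x : X =>
          lam * Finset.univ.sup' (neFin hK) (fun k => c k x)
            + (1 - lam) * Finset.univ.inf' (neFin hK) (fun k => c k x)) := by
  set H : X → ℝ := fun x =>
      lam * Finset.univ.sup' (neFin hK) (fun k => c k x)
        + (1 - lam) * Finset.univ.inf' (neFin hK) (fun k => c k x) with hH
  obtain ⟨xstar, -, hxstar⟩ :=
    Finset.exists_mem_eq_inf' (Finset.univ_nonempty (α := X)) H
  obtain ⟨istar, -, histar⟩ :=
    Finset.exists_mem_eq_inf' (neFin hK) (fun k => c k xstar)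
  have h1lam : (0:ℝ) ≤ 1 - lam := by linarith
  have hα0 : (0:ℝ) ≤ α := by linarith
  -- Step 1: inf over i of H(xs i) ≤ H(xs istar)
  have s1 : Finset.univ.inf' (neFin hK) (fun i => H (xs i)) ≤ H (xs istar) :=
    Finset.inf'_le _ (Finset.mem_univ istar)
  -- Step 2: H(xs istar) ≤ sup_k (lam c k (xs istar) + (1-lam) c istar (xs istar))
  have s2 : H (xs istar) ≤
      Finset.univ.sup' (neFin hK)
        (fun k => lam * c k (xs istar) + (1 - lam) * c istar (xs istar)) := by
    obtain ⟨k0, -, hk0⟩ :=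
      Finset.exists_mem_eq_sup' (neFin hK) (fun k => c k (xs istar))
    have hinf : Finset.univ.inf' (neFin hK) (fun k => c k (xs istar))
        ≤ c istar (xs istar) := Finset.inf'_le _ (Finset.mem_univ istar)
    have hle : H (xs istar) ≤ lam * c k0 (xs istar) + (1 - lam) * c istar (xs istar) := by
      simp only [hH, hk0]
      nlinarith
    exact hle.trans (Finset.le_sup' (fun k => lam * c k (xs istar) + (1 - lam) * c istar (xs istar)) (Finset.mem_univ k0))
  -- Step 3: the min-max value at istar is ≤ H(xstar)
  have s3 : Finset.univ.inf' Finset.univ_nonempty (fun x : X =>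
      Finset.univ.sup' (neFin hK)
        (fun k => lam * c k x + (1 - lam) * c istar x)) ≤ H xstar := by
    have h1 : Finset.univ.sup' (neFin hK)
        (fun k => lam * c k xstar + (1 - lam) * c istar xstar) ≤ H xstar := by
      apply Finset.sup'_le
      intro k _
      have hsup : c k xstar ≤ Finset.univ.sup' (neFin hK) (fun k => c k xstar) :=
        Finset.le_sup' (fun k => c k xstar) (Finset.mem_univ k)
      simp only [hH, ← histar]
      nlinarith
    exact le_trans (Finset.inf'_le _ (Finset.mem_univ xstar)) h1
  calc Finset.univ.inf' (neFin hK) (fun i => H (xs i)) ≤ H (xs istar) := s1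
    _ ≤ _ := s2
    _ ≤ α * _ := happrox istar
    _ ≤ α * H xstar := by exact mul_le_mul_of_nonneg_left s3 hα0
    _ = α * Finset.univ.inf' Finset.univ_nonempty H := by rw [hxstar]
end

section
/- For a nonincreasing nonnegative weight vector $\pmb{w}$ summing to 1 and any nonnegative real vector $\pmb{a}$ of length $K$, it holds that $\frac{1}{K}\sum_{k=1}^K a_k \leq \mathrm{OWA}_{\pmb{w}}(\pmb{a}) \leq w_1 K \cdot \frac{1}{K}\sum_{k=1}^K a_k$, i.e., OWA with nonincreasing weights is bounded between the average and $w_1 K$ times the average. -/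
/-- With nonincreasing weights, OWA lies between the average and `w 1 * K`
times the average. -/
theorem owa_between_average_and_w1K (K : ℕ) (hK : 0 < K) (a w : Fin K → ℝ)
    (ha : ∀ k, 0 ≤ a k)
    (hw : Antitone w) (hw0 : ∀ k, 0 ≤ w k) (hw1 : ∑ k, w k = 1) :
    (∑ k, a k) / K ≤ OWA w a ∧
      OWA w a ≤ w ⟨0, hK⟩ * K * ((∑ k, a k) / K) := by
  set σ := Tuple.sort (fun i => -a i) with hσ
  set b : Fin K → ℝ := fun k => a (σ k) with hb
  have hbsum : ∑ k, b k = ∑ k, a k := Equiv.sum_comp σ a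
  have hbmono : Antitone b := by
    have := Tuple.monotone_sort (fun i => -a i)
    intro i j hij
    have h := this hij
    simp only [Function.comp] at h
    simpa [b] using h
  have hmono : Monovary w b := by
    intro i j hij
    by_cases h : i ≤ j
    · exact absurd (hbmono h) (not_le.2 hij)
    · exact hw (le_of_lt (not_le.1 h))
  have hcheb := hmono.sum_mul_sum_le_card_mul_sum
  rw [hw1, one_mul, hbsum] at hcheb
  have hKpos : (0:ℝ) < K := by exact_mod_cast hK
  constructor
  · rw [div_le_iff₀ hKpos]
    calc ∑ k, a k ≤ K * ∑ i, w i * b i := by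
          simpa [Fintype.card_fin] using hcheb
      _ = OWA w a * K := by rw [OWA]; ring
  · have h1 : OWA w a ≤ ∑ k, w ⟨0, hK⟩ * b k := by
      apply Finset.sum_le_sum
      intro i _
      exact mul_le_mul_of_nonneg_right (hw (by simp [Fin.le_def])) (ha _)
    rw [← Finset.mul_sum, hbsum] at h1
    calc OWA w a ≤ w ⟨0, hK⟩ * ∑ k, a k := h1
      _ = w ⟨0, hK⟩ * K * ((∑ k, a k) / K) := by field_simp
end

section
/- Let $\mathcal{X}$ be a finite nonempty feasible set and $c_1,\dots,c_K : \mathcal{X} \to \mathbb{R}_{\geq 0}$, $\lambda \in [0,1]$. Then $\min_{\pmb{x} \in \mathcal{X}} \left[ \lambda \max_{k \in [K]} c_k(\pmb{x}) + (1-\lambda)\min_{i \in [K]} c_i(\pmb{x}) \right] = \min_{i \in [K]} \min_{\pmb{x} \in \mathcal{X}} \max_{k \in [K]} \left( \lambda c_k(\pmb{x}) + (1-\lambda) c_i(\pmb{x}) \right)$. -/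
/-- The Hurwicz optimization problem decomposes into `K` min-max
subproblems. -/
theorem hurwicz_decomposition (X : Type*) [Fintype X] [Nonempty X]
    (K : ℕ) (hK : 0 < K) (c : Fin K → X → ℝ) (hc : ∀ k x, 0 ≤ c k x)
    (lam : ℝ) (h0 : 0 ≤ lam) (h1 : lam ≤ 1) :
    Finset.univ.inf' Finset.univ_nonempty (fun x : X =>
        lam * Finset.univ.sup' (neFin hK) (fun k => c k x)
          + (1 - lam) * Finset.univ.inf' (neFin hK) (fun k => c k x))
    = Finset.univ.inf' (neFin hK) (fun i =>
        Finset.univ.inf' Finset.univ_nonempty (fun x : X =>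
          Finset.univ.sup' (neFin hK)
            (fun k => lam * c k x + (1 - lam) * c i x))) := by
  have h1' : (0:ℝ) ≤ 1 - lam := by linarith
  apply le_antisymm
  · apply Finset.le_inf'
    intro i _
    apply Finset.le_inf'
    intro x _
    refine le_trans (Finset.inf'_le _ (Finset.mem_univ x)) ?_
    obtain ⟨k0, _, hk0⟩ := Finset.exists_mem_eq_sup' (neFin hK) (fun k => c k x)
    refine le_trans ?_ (Finset.le_sup' (f := fun k => lam * c k x + (1 - lam) * c i x)
      (Finset.mem_univ k0))
    have : Finset.univ.inf' (neFin hK) (fun k => c k x) ≤ c i x :=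
      Finset.inf'_le _ (Finset.mem_univ i)
    rw [← hk0]
    nlinarith
  · apply Finset.le_inf'
    intro x _
    obtain ⟨i0, _, hi0⟩ := Finset.exists_mem_eq_inf' (neFin hK) (fun k => c k x)
    refine le_trans (Finset.inf'_le _ (Finset.mem_univ i0)) ?_
    refine le_trans (Finset.inf'_le _ (Finset.mem_univ x)) ?_
    apply Finset.sup'_le
    intro k _
    have hs : c k x ≤ Finset.univ.sup' (neFin hK) (fun k => c k x) :=
      Finset.le_sup' (f := fun j => c j x) (Finset.mem_univ k)
    rw [← hi0]
    nlinarith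
end

section
/- Consider the instance with $\mathcal{X} = \{\pmb{x} \in \{0,1\}^4 : x_1+x_2+x_3+x_4 = 2\}$, $K = 8$ objectives given by $\pmb{c}_1 = \pmb{c}_3 = (1,0,1,0)$, $\pmb{c}_2 = \pmb{c}_4 = (0,1,0,1)$, $\pmb{c}_5 = \dots = \pmb{c}_8 = (0,0,0,0)$, and nonincreasing weights $\pmb{w} = (0.2,0.2,0.1,0.1,0.1,0.1,0.1,0.1)$. Then for $\pmb{x} = (1,1,0,0)$ it holds $\mathrm{OWA}_{\pmb{w}}(F(\pmb{x})) = 0.6$, for $\pmb{x}' = (1,0,1,0)$ one has $\mathrm{OWA}_{\pmb{w}}(F(\pmb{x}')) = 0.8$, so $\mathrm{OWA}_{\pmb{w}}(F(\pmb{x}')) = \frac{4}{3}\, \mathrm{OWA}_{\pmb{w}}(F(\pmb{x}))$, while after 2-aggregation ($\ell = 2$), all feasible solutions have the same aggregated OWA value. -/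
/-- The eight cost vectors of the tightness example. -/
def cEx : Fin 8 → Fin 4 → ℝ :=
  ![![1, 0, 1, 0], ![0, 1, 0, 1], ![1, 0, 1, 0], ![0, 1, 0, 1],
    ![0, 0, 0, 0], ![0, 0, 0, 0], ![0, 0, 0, 0], ![0, 0, 0, 0]]

/-- The objective-value vector of a solution `x`. -/
noncomputable def FEx (x : Fin 4 → ℝ) : Fin 8 → ℝ := fun k => ∑ i, cEx k i * x i

/-- The weight vector of the example. -/
noncomputable def wEx : Fin 8 → ℝ := ![0.2, 0.2, 0.1, 0.1, 0.1, 0.1, 0.1, 0.1]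

/-- The aggregated weight vector (`ℓ = 2`). -/
noncomputable def wExBar : Fin 4 → ℝ := ![0.4, 0.2, 0.2, 0.2]

/-- The 2-aggregated objective-value vector. -/
noncomputable def FExBar (x : Fin 4 → ℝ) : Fin 4 → ℝ := fun k =>
  (FEx x ⟨2 * k.1, by have := k.isLt; omega⟩
    + FEx x ⟨2 * k.1 + 1, by have := k.isLt; omega⟩) / 2

section vec
variable {α : Type*} (a b c d e f g h : α)
lemma vec8_4 : ![a,b,c,d,e,f,g,h] (4 : Fin 8) = e := rfl
lemma vec8_5 : ![a,b,c,d,e,f,g,h] (5 : Fin 8) = f := rfl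
lemma vec8_6 : ![a,b,c,d,e,f,g,h] (6 : Fin 8) = g := rfl
lemma vec8_7 : ![a,b,c,d,e,f,g,h] (7 : Fin 8) = h := rfl
end vec

lemma cEx0 : cEx 0 = ![1, 0, 1, 0] := rfl
lemma cEx1 : cEx 1 = ![0, 1, 0, 1] := rfl
lemma cEx2 : cEx 2 = ![1, 0, 1, 0] := rfl
lemma cEx3 : cEx 3 = ![0, 1, 0, 1] := rfl
lemma cEx4 : cEx 4 = ![0, 0, 0, 0] := rfl
lemma cEx5 : cEx 5 = ![0, 0, 0, 0] := rfl
lemma cEx6 : cEx 6 = ![0, 0, 0, 0] := rfl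
lemma cEx7 : cEx 7 = ![0, 0, 0, 0] := rfl

lemma owa_perm {a : Fin 8 → ℝ} (w : Fin 8 → ℝ) (τ : Equiv.Perm (Fin 8))
    (hτ : Monotone ((fun i => -a i) ∘ τ)) :
    OWA w a = ∑ k, w k * a (τ k) := by
  have h := Tuple.unique_monotone (Tuple.monotone_sort (fun i => -a i)) hτ
  unfold OWA
  refine Finset.sum_congr rfl fun k _ => ?_
  have := congrFun h k
  simp only [Function.comp_apply, neg_inj] at this
  rw [this]

lemma FEx1 : FEx ![1, 1, 0, 0] = ![1, 1, 1, 1, 0, 0, 0, 0] := by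
  funext k
  fin_cases k <;>
    simp [FEx, Fin.sum_univ_four, cEx0, cEx1, cEx2, cEx3, cEx4, cEx5, cEx6, cEx7,
      vec8_4, vec8_5, vec8_6, vec8_7]

lemma FEx2 : FEx ![1, 0, 1, 0] = ![2, 0, 2, 0, 0, 0, 0, 0] := by
  funext k
  fin_cases k <;>
    simp [FEx, Fin.sum_univ_four, cEx0, cEx1, cEx2, cEx3, cEx4, cEx5, cEx6, cEx7,
      vec8_4, vec8_5, vec8_6, vec8_7] <;> norm_num

lemma step_mono (c : ℝ) (hc : c ≤ 0) (m : ℕ) :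
    Monotone (fun i : Fin 8 => if (i : ℕ) < m then c else 0) := by
  intro i j hij
  have hij' : (i : ℕ) ≤ (j : ℕ) := hij
  dsimp only
  split_ifs with h1 h2
  · exact le_rfl
  · exact hc
  · omega
  · exact le_rfl

lemma owa1 : OWA wEx (FEx ![1, 1, 0, 0]) = 0.6 := by
  have hmono : Monotone ((fun i => -(FEx ![1, 1, 0, 0] i)) ∘ (Equiv.refl (Fin 8))) := by
    have he : ((fun i => -(FEx ![1, 1, 0, 0] i)) ∘ (Equiv.refl (Fin 8)))
        = fun i : Fin 8 => if (i : ℕ) < 4 then (-1 : ℝ) else 0 := by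
      funext k
      fin_cases k <;>
        simp [FEx1, vec8_4, vec8_5, vec8_6, vec8_7]
    rw [he]
    exact step_mono (-1) (by norm_num) 4
  rw [owa_perm wEx (Equiv.refl (Fin 8)) hmono]
  simp [Fin.sum_univ_eight, wEx, FEx1, vec8_4, vec8_5, vec8_6, vec8_7]
  norm_num

lemma owa2 : OWA wEx (FEx ![1, 0, 1, 0]) = 0.8 := by
  have hmono : Monotone ((fun i => -(FEx ![1, 0, 1, 0] i)) ∘ (Equiv.swap 1 2)) := by
    have he : ((fun i => -(FEx ![1, 0, 1, 0] i)) ∘ (Equiv.swap 1 2))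
        = fun i : Fin 8 => if (i : ℕ) < 2 then (-2 : ℝ) else 0 := by
      funext k
      fin_cases k <;>
        simp [FEx2, Equiv.swap_apply_def, vec8_4, vec8_5, vec8_6, vec8_7]
    rw [he]
    exact step_mono (-2) (by norm_num) 2
  rw [owa_perm wEx (Equiv.swap 1 2) hmono]
  simp [Fin.sum_univ_eight, wEx, FEx2, Equiv.swap_apply_def, vec8_4, vec8_5, vec8_6, vec8_7]
  norm_num

lemma bar_const (x : Fin 4 → ℝ) (hsum : (∑ i, x i) = 2) :
    FExBar x = ![1, 1, 0, 0] := by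
  rw [Fin.sum_univ_four] at hsum
  funext k
  fin_cases k <;>
    simp [FExBar, FEx, Fin.sum_univ_four, cEx0, cEx1, cEx2, cEx3, cEx4, cEx5, cEx6, cEx7] <;>
    linarith


/-- The tightness example for the 2-aggregation algorithm: the solution
`(1,1,0,0)` has OWA value `0.6`, the solution `(1,0,1,0)` has OWA value `0.8`,
a ratio of `4/3`, while after 2-aggregation all feasible solutions have the
same aggregated OWA value. -/
theorem two_aggregation_bad_example :
    OWA wEx (FEx ![1, 1, 0, 0]) = 0.6 ∧
    OWA wEx (FEx ![1, 0, 1, 0]) = 0.8 ∧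
    OWA wEx (FEx ![1, 0, 1, 0]) = (4 / 3) * OWA wEx (FEx ![1, 1, 0, 0]) ∧
    ∀ x y : Fin 4 → ℝ,
      ((∀ i, x i = 0 ∨ x i = 1) ∧ (∑ i, x i) = 2) →
      ((∀ i, y i = 0 ∨ y i = 1) ∧ (∑ i, y i) = 2) →
      OWA wExBar (FExBar x) = OWA wExBar (FExBar y) := by
  refine ⟨owa1, owa2, ?_, ?_⟩
  · rw [owa1, owa2]; norm_num
  · intro x y hx hy
    rw [bar_const x hx.2, bar_const y hy.2]
end
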